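/- arXiv:2604.14105 — 15 statements merged into one kernel-verified Lean document; each statement's English description precedes it below -/
import Mathlib

section
/- The category of Σ-H-algebras is equivalent to the category of right-preordered groups. Explicitly: there is an equivalence of categories between (i) the category whose objects are sets X equipped with a constant 0, unary operations π₀, π₁, ι, − and a binary operation +, satisfying: (M) (X,0,+) is a monoid and π₀, π₁, ι preserve 0 and + (f(a+b)=f(a)+f(b) and f(0)=0 for f ∈ {π₀,π₁,ι}); (P1) a = π₀(a)+π₁(a) = π₁(a)+π₀(a) for all a; (P2) −(π₁(a)) = π₁(ι(a)) = π₀(π₁(a)) = π₁(π₀(a)) = 0 for all a; (P3) ι(π₁(a)) = π₀(ι(a)) for all a; (G) a+(−a) = (−a)+a = π₁(a) for all a; (Inj) ι(a) = ι(b) implies π₁(a) = π₁(b); and whose morphisms are maps preserving 0, π₀, π₁, ι, − and +; and (ii) the category whose objects are pairs (G,P) of a group G and a submonoid P ⊆ G, and whose morphisms (G,P) → (H,Q) are group homomorphisms f : G → H with f(P) ⊆ Q. -/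
open CategoryTheory

universe u

/-- A Σ-H-algebra: a set with a constant `0`, unary operations `π₀, π₁, ι, -` and a
binary operation `+`, subject to the axioms (M), (P1), (P2), (P3), (G), (Inj). -/
structure SHAlg : Type (u + 1) where
  /-- the underlying set -/
  X : Type u
  zero : X
  add : X → X → X
  pi0 : X → X
  pi1 : X → X
  iota : X → X
  neg : X → X
  /-- (M): `(X, 0, +)` is a monoid -/
  add_assoc : ∀ a b c, add (add a b) c = add a (add b c)
  zero_add : ∀ a, add zero a = a
  add_zero : ∀ a, add a zero = a
  /-- (M): `π₀, π₁, ι` are monoid morphisms -/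
  pi0_zero : pi0 zero = zero
  pi0_add : ∀ a b, pi0 (add a b) = add (pi0 a) (pi0 b)
  pi1_zero : pi1 zero = zero
  pi1_add : ∀ a b, pi1 (add a b) = add (pi1 a) (pi1 b)
  iota_zero : iota zero = zero
  iota_add : ∀ a b, iota (add a b) = add (iota a) (iota b)
  /-- (P1) -/
  p1a : ∀ a, a = add (pi0 a) (pi1 a)
  p1b : ∀ a, a = add (pi1 a) (pi0 a)
  /-- (P2) -/
  p2a : ∀ a, neg (pi1 a) = zero
  p2b : ∀ a, pi1 (iota a) = zero
  p2c : ∀ a, pi0 (pi1 a) = zero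
  p2d : ∀ a, pi1 (pi0 a) = zero
  /-- (P3) -/
  p3 : ∀ a, iota (pi1 a) = pi0 (iota a)
  /-- (G) -/
  ga : ∀ a, add a (neg a) = pi1 a
  gb : ∀ a, add (neg a) a = pi1 a
  /-- (Inj) -/
  inj : ∀ a b, iota a = iota b → pi1 a = pi1 b

/-- Morphisms of Σ-H-algebras: maps preserving `0, π₀, π₁, ι, -, +`. -/
@[ext]
structure SHAlgHom (A B : SHAlg.{u}) where
  toFun : A.X → B.X
  map_zero : toFun A.zero = B.zero
  map_add : ∀ a b, toFun (A.add a b) = B.add (toFun a) (toFun b)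
  map_pi0 : ∀ a, toFun (A.pi0 a) = B.pi0 (toFun a)
  map_pi1 : ∀ a, toFun (A.pi1 a) = B.pi1 (toFun a)
  map_iota : ∀ a, toFun (A.iota a) = B.iota (toFun a)
  map_neg : ∀ a, toFun (A.neg a) = B.neg (toFun a)

/-- The category of Σ-H-algebras. -/
instance : Category SHAlg.{u} where
  Hom := SHAlgHom
  id A := { toFun := id, map_zero := rfl, map_add := fun _ _ => rfl,
            map_pi0 := fun _ => rfl, map_pi1 := fun _ => rfl,
            map_iota := fun _ => rfl, map_neg := fun _ => rfl }
  comp f g :=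
    { toFun := g.toFun ∘ f.toFun
      map_zero := by simp only [Function.comp_apply, f.map_zero, g.map_zero]
      map_add := fun a b => by
        simp only [Function.comp_apply, f.map_add, g.map_add]
      map_pi0 := fun a => by simp only [Function.comp_apply, f.map_pi0, g.map_pi0]
      map_pi1 := fun a => by simp only [Function.comp_apply, f.map_pi1, g.map_pi1]
      map_iota := fun a => by simp only [Function.comp_apply, f.map_iota, g.map_iota]
      map_neg := fun a => by simp only [Function.comp_apply, f.map_neg, g.map_neg] }
  id_comp _ := rfl
  comp_id _ := rfl
  assoc _ _ _ := rfl

/-- A right-preordered group: a group `G` together with a submonoid `P ⊆ G`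
(the positive cone). -/
structure RPoGrp : Type (u + 1) where
  /-- the underlying group -/
  carrier : Type u
  [grp : Group carrier]
  /-- the positive cone -/
  pos : Submonoid carrier

attribute [instance] RPoGrp.grp

/-- Morphisms of right-preordered groups: group homomorphisms mapping the positive cone
into the positive cone. -/
@[ext]
structure RPoGrpHom (A B : RPoGrp.{u}) where
  toHom : A.carrier →* B.carrier
  map_pos : ∀ p ∈ A.pos, toHom p ∈ B.pos

/-- The category of right-preordered groups. -/
instance : Category RPoGrp.{u} where
  Hom := RPoGrpHom
  id A := ⟨MonoidHom.id _, fun _ hp => hp⟩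
  comp f g := ⟨g.toHom.comp f.toHom, fun p hp => g.map_pos _ (f.map_pos p hp)⟩
  id_comp _ := rfl
  comp_id _ := rfl
  assoc _ _ _ := rfl

/-! The group of a Σ-H-algebra `A` is the set of `a` with `π₁ a = 0` under `+` and `-`, and its
positive cone is the image of `ι`. Conversely `(G, P)` gives the algebra `G × P` with
`π₀ (g, p) = (g, 1)`, `π₁ (g, p) = (1, p)` and `ι (g, p) = (p, 1)`. Going around, `(G, P)` is
recovered as `G × 1`, and `a ↦ (π₀ a, ι a)` is an isomorphism `A ≅ G × P`: it is injective
because `a = π₀ a + π₁ a` and, by (Inj), `π₁ a` is determined by `ι a`. -/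

namespace SHAlg

variable (A : SHAlg.{u})

lemma pi1_pi1 (a : A.X) : A.pi1 (A.pi1 a) = A.pi1 a := by
  conv_rhs => rw [A.p1a (A.pi1 a), A.p2c, A.zero_add]

lemma pi0_eq_self_of_pi1_eq_zero {a : A.X} (h : A.pi1 a = A.zero) : A.pi0 a = a := by
  conv_rhs => rw [A.p1a a, h, A.add_zero]

lemma pi0_pi0 (a : A.X) : A.pi0 (A.pi0 a) = A.pi0 a :=
  A.pi0_eq_self_of_pi1_eq_zero (A.p2d a)

lemma iota_pi1 (a : A.X) : A.iota (A.pi1 a) = A.iota a := by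
  rw [A.p3, A.pi0_eq_self_of_pi1_eq_zero (A.p2b a)]

lemma iota_eq_zero_of_pi1_eq_zero {a : A.X} (h : A.pi1 a = A.zero) : A.iota a = A.zero := by
  rw [← A.iota_pi1, h, A.iota_zero]

lemma add_left_cancel_of_pi1_eq_zero {a b c : A.X} (ha : A.pi1 a = A.zero)
    (h : A.add a b = A.add a c) : b = c := by
  rw [← A.zero_add b, ← A.zero_add c, ← ha, ← A.gb, A.add_assoc, A.add_assoc, h]

lemma neg_eq_of_add_eq_zero {a b : A.X} (ha : A.pi1 a = A.zero)
    (h : A.add a b = A.zero) : A.neg a = b :=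
  A.add_left_cancel_of_pi1_eq_zero ha (by rw [h, A.ga, ha])

lemma pi1_neg (a : A.X) : A.pi1 (A.neg a) = A.zero := by
  have hsum : A.add (A.pi1 a) (A.pi1 (A.neg a)) = A.add (A.pi1 a) A.zero := by
    rw [← A.pi1_add, A.ga, A.pi1_pi1, A.add_zero]
  have hiota : A.iota (A.pi1 (A.neg a)) = A.iota A.zero := by
    refine A.add_left_cancel_of_pi1_eq_zero (A.p2b (A.pi1 a)) ?_
    rw [← A.iota_add, ← A.iota_add, hsum]
  simpa only [A.pi1_pi1, A.pi1_zero] using A.inj _ _ hiota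

lemma pi0_neg (a : A.X) : A.pi0 (A.neg a) = A.neg (A.pi0 a) :=
  (A.neg_eq_of_add_eq_zero (A.p2d a) (by rw [← A.pi0_add, A.ga, A.p2c])).symm

def Grp : Type u := {a : A.X // A.pi1 a = A.zero}

instance : Group A.Grp where
  mul a b := ⟨A.add a.1 b.1, by rw [A.pi1_add, a.2, b.2, A.add_zero]⟩
  one := ⟨A.zero, A.pi1_zero⟩
  inv a := ⟨A.neg a.1, A.pi1_neg a.1⟩
  mul_assoc a b c := Subtype.ext (A.add_assoc a.1 b.1 c.1)
  one_mul a := Subtype.ext (A.zero_add a.1)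
  mul_one a := Subtype.ext (A.add_zero a.1)
  inv_mul_cancel a := Subtype.ext ((A.gb a.1).trans a.2)

def posCone : Submonoid A.Grp where
  carrier := {g | ∃ x, A.iota x = g.1}
  mul_mem' := by
    rintro g h ⟨x, hx⟩ ⟨y, hy⟩
    exact ⟨A.add x y, by rw [A.iota_add, hx, hy]; rfl⟩
  one_mem' := ⟨A.zero, A.iota_zero⟩

def toRPoGrp : RPoGrp.{u} := ⟨A.Grp, A.posCone⟩

@[ext]
lemma hom_ext {A B : SHAlg.{u}} {f g : A ⟶ B} (h : f.toFun = g.toFun) : f = g :=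
  SHAlgHom.ext h

def mapGrp {A B : SHAlg.{u}} (f : A ⟶ B) : A.Grp →* B.Grp where
  toFun a := ⟨f.toFun a.1, by rw [← f.map_pi1, a.2, f.map_zero]⟩
  map_one' := Subtype.ext f.map_zero
  map_mul' a b := Subtype.ext (f.map_add a.1 b.1)

def toRPoGrpFunctor : SHAlg.{u} ⥤ RPoGrp.{u} where
  obj := toRPoGrp
  map f :=
    { toHom := mapGrp f
      map_pos := by
        rintro p ⟨x, hx⟩
        exact ⟨f.toFun x, by rw [← f.map_iota, hx]; rfl⟩ }
  map_id _ := rfl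
  map_comp _ _ := rfl

noncomputable def isoOfBijective {A B : SHAlg.{u}} (f : A ⟶ B) (hf : Function.Bijective f.toFun) :
    A ≅ B where
  hom := f
  inv :=
    let e := Equiv.ofBijective f.toFun hf
    { toFun := e.symm
      map_zero := e.injective (by simp [e, f.map_zero])
      map_add a b := e.injective (by simp [e, f.map_add, Equiv.ofBijective_apply_symm_apply])
      map_pi0 a := e.injective (by simp [e, f.map_pi0, Equiv.ofBijective_apply_symm_apply])
      map_pi1 a := e.injective (by simp [e, f.map_pi1, Equiv.ofBijective_apply_symm_apply])
      map_iota a := e.injective (by simp [e, f.map_iota, Equiv.ofBijective_apply_symm_apply])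
      map_neg a := e.injective (by simp [e, f.map_neg, Equiv.ofBijective_apply_symm_apply]) }
  hom_inv_id := hom_ext (funext (Equiv.ofBijective f.toFun hf).symm_apply_apply)
  inv_hom_id := hom_ext (funext (Equiv.ofBijective f.toFun hf).apply_symm_apply)

end SHAlg

namespace RPoGrp

def toSHAlg (R : RPoGrp.{u}) : SHAlg.{u} where
  X := R.carrier × R.pos
  zero := (1, 1)
  add a b := (a.1 * b.1, a.2 * b.2)
  pi0 a := (a.1, 1)
  pi1 a := (1, a.2)
  iota a := (a.2, 1)
  neg a := (a.1⁻¹, 1)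
  add_assoc a b c := by simp only [mul_assoc]
  zero_add a := by simp only [one_mul]
  add_zero a := by simp only [mul_one]
  pi0_zero := rfl
  pi0_add a b := by simp only [mul_one]
  pi1_zero := rfl
  pi1_add a b := by simp only [mul_one]
  iota_zero := rfl
  iota_add a b := by simp only [Submonoid.coe_mul, mul_one]
  p1a a := by simp only [mul_one, one_mul]
  p1b a := by simp only [mul_one, one_mul]
  p2a a := by simp only [inv_one]
  p2b a := rfl
  p2c a := rfl
  p2d a := rfl
  p3 a := rfl
  ga a := by simp only [mul_inv_cancel, mul_one]
  gb a := by simp only [inv_mul_cancel, one_mul]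
  inj a b h := by rw [Subtype.ext (congrArg Prod.fst h)]

def toSHAlgFunctor : RPoGrp.{u} ⥤ SHAlg.{u} where
  obj := toSHAlg
  map f :=
    { toFun a := (f.toHom a.1, ⟨f.toHom a.2, f.map_pos _ a.2.2⟩)
      map_zero := Prod.ext (map_one _) (Subtype.ext (map_one _))
      map_add _ _ := Prod.ext (map_mul _ _ _) (Subtype.ext (map_mul _ _ _))
      map_pi0 _ := Prod.ext rfl (Subtype.ext (map_one _))
      map_pi1 _ := Prod.ext (map_one _) rfl
      map_iota _ := Prod.ext rfl (Subtype.ext (map_one _))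
      map_neg _ := Prod.ext (map_inv _ _) (Subtype.ext (map_one _)) }
  map_id _ := rfl
  map_comp _ _ := rfl

def isoOfMulEquiv {R S : RPoGrp.{u}} (e : R.carrier ≃* S.carrier)
    (he : ∀ g, e g ∈ S.pos ↔ g ∈ R.pos) : R ≅ S where
  hom := ⟨e.toMonoidHom, fun p hp => (he p).2 hp⟩
  inv := ⟨e.symm.toMonoidHom, fun p hp => (he _).1 (by simpa using hp)⟩
  hom_inv_id := RPoGrpHom.ext (MonoidHom.ext e.symm_apply_apply)
  inv_hom_id := RPoGrpHom.ext (MonoidHom.ext e.apply_symm_apply)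

end RPoGrp

namespace SHAlg

variable (A : SHAlg.{u})

def unitHom : A ⟶ A.toRPoGrp.toSHAlg where
  toFun a := (⟨A.pi0 a, A.p2d a⟩, ⟨⟨A.iota a, A.p2b a⟩, a, rfl⟩)
  map_zero := Prod.ext (Subtype.ext A.pi0_zero) (Subtype.ext (Subtype.ext A.iota_zero))
  map_add a b := Prod.ext (Subtype.ext (A.pi0_add a b)) (Subtype.ext (Subtype.ext (A.iota_add a b)))
  map_pi0 a := Prod.ext (Subtype.ext (A.pi0_pi0 a))
    (Subtype.ext (Subtype.ext (A.iota_eq_zero_of_pi1_eq_zero (A.p2d a))))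
  map_pi1 a := Prod.ext (Subtype.ext (A.p2c a)) (Subtype.ext (Subtype.ext (A.iota_pi1 a)))
  map_iota a := Prod.ext (Subtype.ext (A.pi0_eq_self_of_pi1_eq_zero (A.p2b a)))
    (Subtype.ext (Subtype.ext (A.iota_eq_zero_of_pi1_eq_zero (A.p2b a))))
  map_neg a := Prod.ext (Subtype.ext (A.pi0_neg a))
    (Subtype.ext (Subtype.ext (A.iota_eq_zero_of_pi1_eq_zero (A.pi1_neg a))))

lemma unitHom_injective : Function.Injective A.unitHom.toFun := by
  intro a b h
  have h0 : A.pi0 a = A.pi0 b := congrArg (fun x => x.1.1) h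
  have h1 : A.pi1 a = A.pi1 b := A.inj a b (congrArg (fun x => x.2.1.1) h)
  rw [A.p1a a, A.p1a b, h0, h1]

lemma unitHom_surjective : Function.Surjective A.unitHom.toFun := by
  rintro ⟨g, ⟨p, x, hx⟩⟩
  refine ⟨A.add g.1 (A.pi1 x), Prod.ext (Subtype.ext ?_) (Subtype.ext (Subtype.ext ?_))⟩
  · change A.pi0 (A.add g.1 (A.pi1 x)) = g.1
    rw [A.pi0_add, A.p2c, A.add_zero, A.pi0_eq_self_of_pi1_eq_zero g.2]
  · change A.iota (A.add g.1 (A.pi1 x)) = p.1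
    rw [A.iota_add, A.iota_eq_zero_of_pi1_eq_zero g.2, A.zero_add, A.iota_pi1, hx]

noncomputable def unitIso : A ≅ A.toRPoGrp.toSHAlg :=
  isoOfBijective A.unitHom ⟨A.unitHom_injective, A.unitHom_surjective⟩

end SHAlg

namespace RPoGrp

variable (R : RPoGrp.{u})

def counitIso : R.toSHAlg.toRPoGrp ≅ R :=
  isoOfMulEquiv
    { toFun x := x.1.1
      invFun g := ⟨(g, 1), rfl⟩
      left_inv x := Subtype.ext (Prod.ext rfl (congrArg Prod.snd x.2).symm)
      right_inv _ := rfl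
      map_mul' _ _ := rfl }
    (by
      rintro ⟨⟨g, p⟩, hp⟩
      obtain rfl : p = 1 := congrArg Prod.snd hp
      change g ∈ R.pos ↔ ∃ y : R.carrier × R.pos, ((y.2 : R.carrier), 1) = (g, 1)
      constructor
      · intro hg
        exact ⟨(1, ⟨g, hg⟩), rfl⟩
      · rintro ⟨y, hy⟩
        obtain ⟨rfl, -⟩ := Prod.mk.inj hy
        exact y.2.2)

end RPoGrp

noncomputable def shAlgEquivRPoGrp : SHAlg.{u} ≌ RPoGrp.{u} :=
  CategoryTheory.Equivalence.mk SHAlg.toRPoGrpFunctor RPoGrp.toSHAlgFunctor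
    (NatIso.ofComponents SHAlg.unitIso fun f =>
      SHAlg.hom_ext (funext fun a =>
        Prod.ext (Subtype.ext (f.map_pi0 a).symm) (Subtype.ext (Subtype.ext (f.map_iota a).symm))))
    (NatIso.ofComponents RPoGrp.counitIso fun _ => rfl)

/-- the category of Σ-H-algebras is equivalent to the category of
right-preordered groups. -/
theorem shAlg_equiv_rpoGrp : Nonempty (SHAlg.{u} ≌ RPoGrp.{u}) :=
  ⟨shAlgEquivRPoGrp⟩
end

section
/- The category of Σ'-H'-algebras is equivalent to the category of preordered groups. Explicitly: there is an equivalence of categories between (i) the category whose objects are Σ-H-algebras (sets X with constant 0, unary operations π₀, π₁, ι, −, binary +, satisfying (M) (X,0,+) is a monoid and π₀, π₁, ι preserve 0 and +; (P1) a = π₀(a)+π₁(a) = π₁(a)+π₀(a); (P2) −(π₁(a)) = π₁(ι(a)) = π₀(π₁(a)) = π₁(π₀(a)) = 0; (P3) ι(π₁(a)) = π₀(ι(a)); (G) a+(−a) = (−a)+a = π₁(a); (Inj) ι(a)=ι(b) → π₁(a)=π₁(b)) additionally equipped with a unary operation ▷ satisfying (C1) ι(▷(a)) = π₀(a)+ι(π₁(a))−π₀(a)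 and (C2) π₀(▷(a)) = 0, with morphisms the maps preserving all operations; and (ii) the category whose objects are pairs (G,P) of a group G and a submonoid P ⊆ G that is closed under conjugation (g·p·g⁻¹ ∈ P for all g ∈ G, p ∈ P), and whose morphisms (G,P) → (H,Q) are group homomorphisms f with f(P) ⊆ Q. -/
open CategoryTheory

universe u

/-- A Σ'-H'-algebra: a Σ-H-algebra (a set with a constant `0`, unary operations
`π₀, π₁, ι, -` and a binary operation `+`, subject to the axioms (M), (P1), (P2),
(P3), (G), (Inj)) with one further unary operation `▷` subject to (C1) and (C2). -/
structure SHAlg' : Type (u + 1) where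
  /-- the underlying set -/
  X : Type u
  zero : X
  add : X → X → X
  pi0 : X → X
  pi1 : X → X
  iota : X → X
  neg : X → X
  rhd : X → X
  /-- (M): `(X, 0, +)` is a monoid -/
  add_assoc : ∀ a b c, add (add a b) c = add a (add b c)
  zero_add : ∀ a, add zero a = a
  add_zero : ∀ a, add a zero = a
  /-- (M): `π₀, π₁, ι` are monoid morphisms -/
  pi0_zero : pi0 zero = zero
  pi0_add : ∀ a b, pi0 (add a b) = add (pi0 a) (pi0 b)
  pi1_zero : pi1 zero = zero
  pi1_add : ∀ a b, pi1 (add a b) = add (pi1 a) (pi1 b)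
  iota_zero : iota zero = zero
  iota_add : ∀ a b, iota (add a b) = add (iota a) (iota b)
  /-- (P1) -/
  p1a : ∀ a, a = add (pi0 a) (pi1 a)
  p1b : ∀ a, a = add (pi1 a) (pi0 a)
  /-- (P2) -/
  p2a : ∀ a, neg (pi1 a) = zero
  p2b : ∀ a, pi1 (iota a) = zero
  p2c : ∀ a, pi0 (pi1 a) = zero
  p2d : ∀ a, pi1 (pi0 a) = zero
  /-- (P3) -/
  p3 : ∀ a, iota (pi1 a) = pi0 (iota a)
  /-- (G) -/
  ga : ∀ a, add a (neg a) = pi1 a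
  gb : ∀ a, add (neg a) a = pi1 a
  /-- (Inj) -/
  inj : ∀ a b, iota a = iota b → pi1 a = pi1 b
  /-- (C1): `ι(▷ a) = π₀ a + ι(π₁ a) - π₀ a` -/
  c1 : ∀ a, iota (rhd a) = add (add (pi0 a) (iota (pi1 a))) (neg (pi0 a))
  /-- (C2): `π₀(▷ a) = 0` -/
  c2 : ∀ a, pi0 (rhd a) = zero

/-- Morphisms of Σ'-H'-algebras: maps preserving `0, π₀, π₁, ι, -, +, ▷`. -/
@[ext]
structure SHAlg'Hom (A B : SHAlg'.{u}) where
  toFun : A.X → B.X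
  map_zero : toFun A.zero = B.zero
  map_add : ∀ a b, toFun (A.add a b) = B.add (toFun a) (toFun b)
  map_pi0 : ∀ a, toFun (A.pi0 a) = B.pi0 (toFun a)
  map_pi1 : ∀ a, toFun (A.pi1 a) = B.pi1 (toFun a)
  map_iota : ∀ a, toFun (A.iota a) = B.iota (toFun a)
  map_neg : ∀ a, toFun (A.neg a) = B.neg (toFun a)
  map_rhd : ∀ a, toFun (A.rhd a) = B.rhd (toFun a)

/-- The category of Σ'-H'-algebras. -/
instance : Category SHAlg'.{u} where
  Hom := SHAlg'Hom
  id A := { toFun := id, map_zero := rfl, map_add := fun _ _ => rfl,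
            map_pi0 := fun _ => rfl, map_pi1 := fun _ => rfl,
            map_iota := fun _ => rfl, map_neg := fun _ => rfl,
            map_rhd := fun _ => rfl }
  comp f g :=
    { toFun := g.toFun ∘ f.toFun
      map_zero := by simp only [Function.comp_apply, f.map_zero, g.map_zero]
      map_add := fun a b => by
        simp only [Function.comp_apply, f.map_add, g.map_add]
      map_pi0 := fun a => by simp only [Function.comp_apply, f.map_pi0, g.map_pi0]
      map_pi1 := fun a => by simp only [Function.comp_apply, f.map_pi1, g.map_pi1]
      map_iota := fun a => by simp only [Function.comp_apply, f.map_iota, g.map_iota]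
      map_neg := fun a => by simp only [Function.comp_apply, f.map_neg, g.map_neg]
      map_rhd := fun a => by simp only [Function.comp_apply, f.map_rhd, g.map_rhd] }
  id_comp _ := rfl
  comp_id _ := rfl
  assoc _ _ _ := rfl

/-- A preordered group: a group `G` together with a submonoid `P ⊆ G` closed under
conjugation by every element of `G`. -/
structure PoGrp : Type (u + 1) where
  /-- the underlying group -/
  carrier : Type u
  [grp : Group carrier]
  /-- the positive cone -/
  pos : Submonoid carrier
  /-- the positive cone is closed under conjugation -/
  conj_mem : ∀ g : carrier, ∀ p ∈ pos, g * p * g⁻¹ ∈ pos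

attribute [instance] PoGrp.grp

/-- Morphisms of preordered groups: group homomorphisms mapping the positive cone into
the positive cone. -/
@[ext]
structure PoGrpHom (A B : PoGrp.{u}) where
  toHom : A.carrier →* B.carrier
  map_pos : ∀ p ∈ A.pos, toHom p ∈ B.pos

/-- The category of preordered groups. -/
instance : Category PoGrp.{u} where
  Hom := PoGrpHom
  id A := ⟨MonoidHom.id _, fun _ hp => hp⟩
  comp f g := ⟨g.toHom.comp f.toHom, fun p hp => g.map_pos _ (f.map_pos p hp)⟩
  id_comp _ := rfl
  comp_id _ := rfl
  assoc _ _ _ := rfl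

/-!
Every element of a Σ'-H'-algebra `A` splits as `a = π₀ a + π₁ a`. The elements with `π₁ a = 0`
form a group `G` under `+` and `-`, and by (Inj) the map `ι ∘ π₁` identifies the `π₁`-part
of `A` with a submonoid `P` of `G`, which (C1) makes closed under conjugation. Hence
`a ↦ (π₀ a, ι (π₁ a))` is a bijective morphism `A → G × P`, where conversely a preordered
group `(G, P)` is made into the algebra `G × P` with `π₀ (g, p) = (g, 1)`, `π₁ (g, p) = (1, p)`,
`ι (g, p) = (p, 1)` and `▷ (g, p) = (1, g p g⁻¹)`.
-/

namespace SHAlg'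

variable (A : SHAlg'.{u})

theorem pi0_pi0 (a : A.X) : A.pi0 (A.pi0 a) = A.pi0 a := by
  simpa only [A.p2d, A.add_zero] using (A.p1a (A.pi0 a)).symm

theorem pi1_pi1 (a : A.X) : A.pi1 (A.pi1 a) = A.pi1 a := by
  simpa only [A.p2c, A.add_zero] using (A.p1b (A.pi1 a)).symm

variable {A}

theorem pi0_eq_self_of_pi1_eq_zero {a : A.X} (h : A.pi1 a = A.zero) : A.pi0 a = a := by
  simpa only [h, A.add_zero] using (A.p1a a).symm

theorem add_left_cancel_of_pi1_eq_zero {u v w : A.X} (hu : A.pi1 u = A.zero)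
    (h : A.add u v = A.add u w) : v = w := by
  have := congrArg (A.add (A.neg u)) h
  rwa [← A.add_assoc, ← A.add_assoc, A.gb, hu, A.zero_add, A.zero_add] at this

variable (A)

theorem pi1_neg (a : A.X) : A.pi1 (A.neg a) = A.zero := by
  have hsum : A.add (A.pi1 a) (A.pi1 (A.neg a)) = A.add (A.pi1 a) A.zero := by
    rw [A.add_zero, ← A.pi1_add, A.ga, A.pi1_pi1]
  -- `ι (π₁ a)` has trivial `π₁`, so it cancels; then (Inj) applies.
  have hiota : A.iota (A.pi1 (A.neg a)) = A.iota A.zero :=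
    add_left_cancel_of_pi1_eq_zero (A.p2b (A.pi1 a)) (by rw [← A.iota_add, ← A.iota_add, hsum])
  simpa only [A.pi1_pi1, A.pi1_zero] using A.inj _ _ hiota

theorem pi0_neg (a : A.X) : A.pi0 (A.neg a) = A.neg (A.pi0 a) := by
  have hright : A.add (A.pi0 a) (A.pi0 (A.neg a)) = A.zero := by
    rw [← A.pi0_add, A.ga, A.p2c]
  have hleft : A.add (A.neg (A.pi0 a)) (A.pi0 a) = A.zero := by
    rw [A.gb, A.p2d]
  calc A.pi0 (A.neg a)
      = A.add (A.add (A.neg (A.pi0 a)) (A.pi0 a)) (A.pi0 (A.neg a)) := by rw [hleft, A.zero_add]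
    _ = A.neg (A.pi0 a) := by rw [A.add_assoc, hright, A.add_zero]

theorem pi1_rhd (a : A.X) : A.pi1 (A.rhd a) = A.rhd a := by
  simpa only [A.c2, A.zero_add] using (A.p1a (A.rhd a)).symm

variable {A}

theorem pi0_add_pi1 {g : A.X} (hg : A.pi1 g = A.zero) (a : A.X) :
    A.pi0 (A.add g (A.pi1 a)) = g := by
  rw [A.pi0_add, A.p2c, A.add_zero, pi0_eq_self_of_pi1_eq_zero hg]

theorem pi1_add_pi1 {g : A.X} (hg : A.pi1 g = A.zero) (a : A.X) :
    A.pi1 (A.add g (A.pi1 a)) = A.pi1 a := by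
  rw [A.pi1_add, hg, A.zero_add, A.pi1_pi1]

theorem eq_of_pi0_eq_of_iota_pi1_eq {a b : A.X} (h0 : A.pi0 a = A.pi0 b)
    (h1 : A.iota (A.pi1 a) = A.iota (A.pi1 b)) : a = b := by
  have h1' := A.inj _ _ h1
  rw [A.pi1_pi1, A.pi1_pi1] at h1'
  rw [A.p1a a, A.p1a b, h0, h1']

noncomputable def isoOfBijective {A B : SHAlg'.{u}} (f : A ⟶ B)
    (hf : Function.Bijective f.toFun) : A ≅ B :=
  let e := Equiv.ofBijective f.toFun hf
  have he (x : B.X) : f.toFun (e.symm x) = x := e.apply_symm_apply x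
  { hom := f
    inv :=
      { toFun := e.symm
        map_zero := hf.1 (by rw [he, f.map_zero])
        map_add := fun a b => hf.1 (by rw [he, f.map_add, he, he])
        map_pi0 := fun a => hf.1 (by rw [he, f.map_pi0, he])
        map_pi1 := fun a => hf.1 (by rw [he, f.map_pi1, he])
        map_iota := fun a => hf.1 (by rw [he, f.map_iota, he])
        map_neg := fun a => hf.1 (by rw [he, f.map_neg, he])
        map_rhd := fun a => hf.1 (by rw [he, f.map_rhd, he]) }
    hom_inv_id := SHAlg'Hom.ext (funext e.symm_apply_apply)
    inv_hom_id := SHAlg'Hom.ext (funext e.apply_symm_apply) }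

variable (A)

def KerPi1 : Type u := {x : A.X // A.pi1 x = A.zero}

instance : Group A.KerPi1 where
  one := ⟨A.zero, A.pi1_zero⟩
  mul a b := ⟨A.add a.1 b.1, by rw [A.pi1_add, a.2, b.2, A.add_zero]⟩
  inv a := ⟨A.neg a.1, A.pi1_neg a.1⟩
  mul_assoc a b c := Subtype.ext (A.add_assoc _ _ _)
  one_mul a := Subtype.ext (A.zero_add _)
  mul_one a := Subtype.ext (A.add_zero _)
  inv_mul_cancel a := Subtype.ext ((A.gb a.1).trans a.2)

def cone : Submonoid A.KerPi1 where
  carrier := {g | ∃ a : A.X, A.iota (A.pi1 a) = g.1}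
  one_mem' := ⟨A.zero, by rw [A.pi1_zero, A.iota_zero]; rfl⟩
  mul_mem' := by
    rintro x y ⟨a, ha⟩ ⟨b, hb⟩
    exact ⟨A.add a b, by rw [A.pi1_add, A.iota_add, ha, hb]; rfl⟩

theorem conj_mem_cone (g p : A.KerPi1) (hp : p ∈ A.cone) :
    g * p * g⁻¹ ∈ A.cone := by
  obtain ⟨a, ha⟩ := hp
  refine ⟨A.rhd (A.add g.1 (A.pi1 a)), ?_⟩
  rw [A.pi1_rhd, A.c1, pi0_add_pi1 g.2, pi1_add_pi1 g.2, ha]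
  rfl

def poGrp : PoGrp.{u} where
  carrier := A.KerPi1
  pos := A.cone
  conj_mem := A.conj_mem_cone

def toPoGrp : SHAlg'.{u} ⥤ PoGrp.{u} where
  obj := poGrp
  map {A B} f :=
    { toHom :=
        { toFun := fun x => ⟨f.toFun x.1, by rw [← f.map_pi1, x.2, f.map_zero]⟩
          map_one' := Subtype.ext f.map_zero
          map_mul' := fun x y => Subtype.ext (f.map_add x.1 y.1) }
      map_pos := by
        rintro p ⟨a, ha⟩
        exact ⟨f.toFun a, by rw [← f.map_pi1, ← f.map_iota, ha]; rfl⟩ }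

end SHAlg'

namespace PoGrp

def shAlg' (G : PoGrp.{u}) : SHAlg'.{u} where
  X := G.carrier × G.pos
  zero := 1
  add := (· * ·)
  pi0 a := (a.1, 1)
  pi1 a := (1, a.2)
  iota a := (a.2, 1)
  neg a := (a.1⁻¹, 1)
  rhd a := (1, ⟨a.1 * a.2 * a.1⁻¹, G.conj_mem _ _ a.2.2⟩)
  add_assoc := mul_assoc
  zero_add := one_mul
  add_zero := mul_one
  pi0_zero := rfl
  pi0_add _ _ := Prod.ext rfl (one_mul 1).symm
  pi1_zero := rfl
  pi1_add _ _ := Prod.ext (one_mul 1).symm rfl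
  iota_zero := rfl
  iota_add _ _ := Prod.ext rfl (one_mul 1).symm
  p1a a := Prod.ext (mul_one a.1).symm (one_mul a.2).symm
  p1b a := Prod.ext (one_mul a.1).symm (mul_one a.2).symm
  p2a _ := Prod.ext inv_one rfl
  p2b _ := rfl
  p2c _ := rfl
  p2d _ := rfl
  p3 _ := rfl
  ga a := Prod.ext (mul_inv_cancel a.1) (mul_one a.2)
  gb a := Prod.ext (inv_mul_cancel a.1) (one_mul a.2)
  inj _ _ h := Prod.ext rfl (Subtype.ext (congrArg Prod.fst h))
  c1 _ := Prod.ext rfl (by simp)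
  c2 _ := rfl

def toSHAlg' : PoGrp.{u} ⥤ SHAlg'.{u} where
  obj := shAlg'
  map {G H} f :=
    { toFun := fun a => (f.toHom a.1, ⟨f.toHom a.2, f.map_pos _ a.2.2⟩)
      map_zero := Prod.ext (map_one _) (Subtype.ext (map_one _))
      map_add := fun _ _ => Prod.ext (map_mul _ _ _) (Subtype.ext (map_mul _ _ _))
      map_pi0 := fun _ => Prod.ext rfl (Subtype.ext (map_one _))
      map_pi1 := fun _ => Prod.ext (map_one _) rfl
      map_iota := fun _ => Prod.ext rfl (Subtype.ext (map_one _))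
      map_neg := fun _ => Prod.ext (map_inv _ _) (Subtype.ext (map_one _))
      map_rhd := fun a => Prod.ext (map_one _) (Subtype.ext
        (by simp only [map_mul, map_inv] :
          f.toHom (a.1 * a.2 * a.1⁻¹) = f.toHom a.1 * f.toHom a.2 * (f.toHom a.1)⁻¹)) }

def counitIso (G : PoGrp.{u}) : G.shAlg'.poGrp ≅ G where
  hom :=
    { toHom := { toFun := fun x => x.1.1, map_one' := rfl, map_mul' := fun _ _ => rfl }
      map_pos := by
        rintro p ⟨a, ha⟩
        show p.1.1 ∈ G.pos
        rw [← congrArg Prod.fst ha]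
        exact a.2.2 }
  inv :=
    { toHom :=
        { toFun := fun g => ⟨(g, 1), rfl⟩
          map_one' := rfl
          map_mul' := fun _ _ => Subtype.ext (Prod.ext rfl (one_mul 1).symm) }
      map_pos := fun g hg => ⟨(1, ⟨g, hg⟩), rfl⟩ }
  hom_inv_id := PoGrpHom.ext (MonoidHom.ext fun x =>
    Subtype.ext (Prod.ext rfl (congrArg Prod.snd x.2).symm))

end PoGrp

namespace SHAlg'

variable (A : SHAlg'.{u})

theorem poGrp_shAlg'_ext {x y : A.poGrp.shAlg'.X} (h0 : x.1.1 = y.1.1) (h1 : x.2.1.1 = y.2.1.1) :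
    x = y :=
  Prod.ext (Subtype.ext h0) (Subtype.ext (Subtype.ext h1))

def unit : A ⟶ A.poGrp.shAlg' where
  toFun a := (⟨A.pi0 a, A.p2d a⟩, ⟨⟨A.iota (A.pi1 a), A.p2b _⟩, ⟨a, rfl⟩⟩)
  map_zero := poGrp_shAlg'_ext A A.pi0_zero
    (by rw [A.pi1_zero, A.iota_zero] : A.iota (A.pi1 A.zero) = A.zero)
  map_add a b := poGrp_shAlg'_ext A (A.pi0_add a b)
    (by rw [A.pi1_add, A.iota_add] :
      A.iota (A.pi1 (A.add a b)) = A.add (A.iota (A.pi1 a)) (A.iota (A.pi1 b)))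
  map_pi0 a := poGrp_shAlg'_ext A (A.pi0_pi0 a)
    (by rw [A.p2d, A.iota_zero] : A.iota (A.pi1 (A.pi0 a)) = A.zero)
  map_pi1 a := poGrp_shAlg'_ext A (A.p2c a)
    (by rw [A.pi1_pi1] : A.iota (A.pi1 (A.pi1 a)) = A.iota (A.pi1 a))
  map_iota a := poGrp_shAlg'_ext A (A.p3 a).symm
    (by rw [A.p2b, A.iota_zero] : A.iota (A.pi1 (A.iota a)) = A.zero)
  map_neg a := poGrp_shAlg'_ext A (A.pi0_neg a)
    (by rw [A.pi1_neg, A.iota_zero] : A.iota (A.pi1 (A.neg a)) = A.zero)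
  map_rhd a := poGrp_shAlg'_ext A (A.c2 a)
    (by rw [A.pi1_rhd, A.c1] :
      A.iota (A.pi1 (A.rhd a)) = A.add (A.add (A.pi0 a) (A.iota (A.pi1 a))) (A.neg (A.pi0 a)))

theorem unit_bijective : Function.Bijective A.unit.toFun := by
  refine ⟨fun a b h => eq_of_pi0_eq_of_iota_pi1_eq ?_ ?_, ?_⟩
  · exact congrArg (fun x => x.1.1) h
  · exact congrArg (fun x => x.2.1.1) h
  · rintro ⟨g, p, a, ha⟩
    exact ⟨A.add g.1 (A.pi1 a), poGrp_shAlg'_ext A (pi0_add_pi1 g.2 a)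
      (by rw [pi1_add_pi1 g.2, ha] : A.iota (A.pi1 (A.add g.1 (A.pi1 a))) = p.1)⟩

variable {A} in
theorem unit_naturality {B : SHAlg'.{u}} (f : A ⟶ B) :
    f ≫ B.unit = A.unit ≫ PoGrp.toSHAlg'.map (toPoGrp.map f) :=
  SHAlg'Hom.ext (funext fun a => poGrp_shAlg'_ext B (f.map_pi0 a).symm
    (by rw [← f.map_pi1, ← f.map_iota] :
      B.iota (B.pi1 (f.toFun a)) = f.toFun (A.iota (A.pi1 a))))

end SHAlg'

/-- the category of Σ'-H'-algebras is equivalent to the category of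
preordered groups. -/
theorem shAlg'_equiv_poGrp : Nonempty (SHAlg'.{u} ≌ PoGrp.{u}) :=
  ⟨.mk SHAlg'.toPoGrp PoGrp.toSHAlg'
    (NatIso.ofComponents (fun A => SHAlg'.isoOfBijective A.unit A.unit_bijective)
      SHAlg'.unit_naturality)
    (NatIso.ofComponents PoGrp.counitIso fun _ => rfl)⟩
end

section
/- Let X₁ and X₀ be groups and d, c : X₁ → X₀, e : X₀ → X₁ group homomorphisms with d ∘ e = id and c ∘ e = id, and let D = {(a,b) ∈ X₁ × X₁ : d(a) = c(b)} (a subgroup of X₁ × X₁). If m : D → X₁ is a group homomorphism satisfying m(a, e(d(a))) = a and m(e(c(b)), b) = b for all a, b ∈ X₁, then m(a,b) = b · e(c(b))⁻¹ · a for all (a,b) ∈ D. In particular there is at most one such homomorphism m. -/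
/-- The subgroup of composable pairs of a reflexive graph of groups:
`D = {(a,b) ∈ X₁ × X₁ : d a = c b}`. -/
def compPairs {X₁ X₀ : Type*} [Group X₁] [Group X₀] (d c : X₁ →* X₀) :
    Subgroup (X₁ × X₁) where
  carrier := {p | d p.1 = c p.2}
  one_mem' := by simp
  mul_mem' := by
    intro a b ha hb
    simp only [Set.mem_setOf_eq, Prod.fst_mul, Prod.snd_mul, map_mul] at *
    rw [ha, hb]
  inv_mem' := by
    intro a ha
    simp only [Set.mem_setOf_eq, Prod.fst_inv, Prod.snd_inv, map_inv] at *
    rw [ha]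

theorem mem_compPairs {X₁ X₀ : Type*} [Group X₁] [Group X₀] (d c : X₁ →* X₀)
    (p : X₁ × X₁) : p ∈ compPairs d c ↔ d p.1 = c p.2 := Iff.rfl

/-! Every composable pair factors as an identity-on-the-left pair times an identity-on-the-right
pair: `(a, b) = (e (c b), b) * ((e (c b))⁻¹ * a, 1)`, the second factor being composable because
`d ((e (c b))⁻¹ * a) = (c b)⁻¹ * d a = 1`. Since `m` is a homomorphism, the unit laws then
determine `m (a, b) = b * (e (c b))⁻¹ * a`. -/

section CompPairs

variable {X₁ X₀ : Type*} [Group X₁] [Group X₀] {d c : X₁ →* X₀} {e : X₀ →* X₁}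

lemma map_inv_mul_eq_one_of_mem_compPairs (hde : ∀ x, d (e x) = x) {p : X₁ × X₁}
    (hp : p ∈ compPairs d c) : d ((e (c p.2))⁻¹ * p.1) = 1 := by
  rw [map_mul, map_inv, hde, ← (mem_compPairs d c p).mp hp, inv_mul_cancel]

lemma compPairs_eq_mul (hde : ∀ x, d (e x) = x) (hce : ∀ x, c (e x) = x)
    (p : compPairs d c) :
    p = ⟨(e (c (p : X₁ × X₁).2), (p : X₁ × X₁).2),
          (mem_compPairs d c _).mpr (hde (c (p : X₁ × X₁).2))⟩ *
        ⟨((e (c (p : X₁ × X₁).2))⁻¹ * (p : X₁ × X₁).1,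
          e (d ((e (c (p : X₁ × X₁).2))⁻¹ * (p : X₁ × X₁).1))),
          (mem_compPairs d c _).mpr (hce _).symm⟩ := by
  obtain ⟨⟨a, b⟩, hp⟩ := p
  have hd1 := map_inv_mul_eq_one_of_mem_compPairs hde hp
  ext
  · exact (mul_inv_cancel_left _ _).symm
  · simp only [Subgroup.coe_mul, Prod.snd_mul, hd1, map_one, mul_one]

lemma apply_eq_of_unit_laws (hde : ∀ x, d (e x) = x) (hce : ∀ x, c (e x) = x)
    (m : compPairs d c →* X₁)
    (hml : ∀ a : X₁, m ⟨(a, e (d a)), (mem_compPairs d c _).mpr (hce (d a)).symm⟩ = a)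
    (hmr : ∀ b : X₁, m ⟨(e (c b), b), (mem_compPairs d c _).mpr (hde (c b))⟩ = b)
    (p : compPairs d c) :
    m p = (p : X₁ × X₁).2 * (e (c (p : X₁ × X₁).2))⁻¹ * (p : X₁ × X₁).1 := by
  conv_lhs => rw [compPairs_eq_mul hde hce p, map_mul, hmr, hml]
  exact (mul_assoc _ _ _).symm

end CompPairs

/-- any internal-category composition `m` on a reflexive graph of groups
is given by `m (a, b) = b * (e (c b))⁻¹ * a`; in particular it is unique. -/
theorem composition_unique {X₁ X₀ : Type*} [Group X₁] [Group X₀]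
    (d c : X₁ →* X₀) (e : X₀ →* X₁)
    (hde : ∀ x, d (e x) = x) (hce : ∀ x, c (e x) = x)
    (m : compPairs d c →* X₁)
    (hml : ∀ a : X₁, m ⟨(a, e (d a)), (mem_compPairs d c _).mpr (hce (d a)).symm⟩ = a)
    (hmr : ∀ b : X₁, m ⟨(e (c b), b), (mem_compPairs d c _).mpr (hde (c b))⟩ = b) :
    (∀ p : compPairs d c,
        m p = (p : X₁ × X₁).2 * (e (c (p : X₁ × X₁).2))⁻¹ * (p : X₁ × X₁).1) ∧
    (∀ m' : compPairs d c →* X₁,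
        (∀ a : X₁, m' ⟨(a, e (d a)), (mem_compPairs d c _).mpr (hce (d a)).symm⟩ = a) →
        (∀ b : X₁, m' ⟨(e (c b), b), (mem_compPairs d c _).mpr (hde (c b))⟩ = b) →
        m' = m) := by
  refine ⟨apply_eq_of_unit_laws hde hce m hml hmr, fun m' hml' hmr' => ?_⟩
  ext p
  rw [apply_eq_of_unit_laws hde hce m hml hmr, apply_eq_of_unit_laws hde hce m' hml' hmr']
end

section
/- Let X₁ and X₀ be groups and d, c : X₁ → X₀, e : X₀ → X₁ group homomorphisms with d ∘ e = id and c ∘ e = id, let D = {(a,b) ∈ X₁ × X₁ : d(a) = c(b)}, and let m : D → X₁ be a group homomorphism satisfying m(a, e(d(a))) = a and m(e(c(b)), b) = b for all a, b ∈ X₁. If σ : X₁ → X₁ is any function such that d(σ(a)) = c(a) and m(σ(a), a) = e(d(a)) for all a ∈ X₁, then σ(a) = e(c(a)) · a⁻¹ · e(d(a)) for all a ∈ X₁. In particular such a function σ (the inversion of an internal groupoid) is unique. -/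
/- A composable pair factors as `(a, b) = (e (c b), b) * ((e (c b))⁻¹ * a, 1)`, so the unit laws
and multiplicativity force `m (a, b) = b * (e (c b))⁻¹ * a`. Solving `m (σ a, a) = e (d a)` for
`σ a` gives the formula. -/

section

variable {X₁ X₀ : Type*} [Group X₁] [Group X₀] {d c : X₁ →* X₀} {e : X₀ →* X₁}
  {m : compPairs d c →* X₁}

theorem compPairs_map_mk_one
    (hml : ∀ a (h : (a, e (d a)) ∈ compPairs d c), m ⟨_, h⟩ = a) {x : X₁} (hx : d x = 1) :
    m ⟨(x, 1), (mem_compPairs d c _).mpr (by rw [hx, map_one])⟩ = x := by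
  have key := hml x ((mem_compPairs d c _).mpr (by rw [hx, map_one, map_one]))
  simp only [hx, map_one] at key
  exact key

theorem compPairs_map_eq (hde : ∀ x, d (e x) = x)
    (hml : ∀ a (h : (a, e (d a)) ∈ compPairs d c), m ⟨_, h⟩ = a)
    (hmr : ∀ b (h : (e (c b), b) ∈ compPairs d c), m ⟨_, h⟩ = b) {a b : X₁}
    (hab : (a, b) ∈ compPairs d c) :
    m ⟨(a, b), hab⟩ = b * (e (c b))⁻¹ * a := by
  have hdc : d a = c b := hab
  have hker : d ((e (c b))⁻¹ * a) = 1 := by simp [hde, hdc]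
  have hfactor : (⟨(a, b), hab⟩ : compPairs d c) =
      ⟨(e (c b), b), (mem_compPairs d c _).mpr (hde _)⟩ *
        ⟨((e (c b))⁻¹ * a, 1), (mem_compPairs d c _).mpr (by rw [hker, map_one])⟩ := by
    ext <;> simp
  rw [hfactor, map_mul, hmr, compPairs_map_mk_one hml hker, mul_assoc]

end

/-- the inversion of an internal groupoid of groups is unique, given by
`σ a = e (c a) * a⁻¹ * e (d a)`. -/
theorem inversion_unique {X₁ X₀ : Type*} [Group X₁] [Group X₀]
    (d c : X₁ →* X₀) (e : X₀ →* X₁)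
    (hde : ∀ x, d (e x) = x) (hce : ∀ x, c (e x) = x)
    (m : compPairs d c →* X₁)
    (hml : ∀ a : X₁, m ⟨(a, e (d a)), (mem_compPairs d c _).mpr (hce (d a)).symm⟩ = a)
    (hmr : ∀ b : X₁, m ⟨(e (c b), b), (mem_compPairs d c _).mpr (hde (c b))⟩ = b)
    (σ : X₁ → X₁)
    (hσd : ∀ a : X₁, d (σ a) = c a)
    (hσm : ∀ a : X₁, m ⟨(σ a, a), (mem_compPairs d c _).mpr (hσd a)⟩ = e (d a)) :
    ∀ a : X₁, σ a = e (c a) * a⁻¹ * e (d a) := by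
  intro a
  have key := hσm a
  rw [compPairs_map_eq hde (fun a _ => hml a) (fun b _ => hmr b)] at key
  rw [← key]
  group
end

section
/- Let X₁ and X₀ be groups and d, c : X₁ → X₀, e : X₀ → X₁ group homomorphisms with d ∘ e = id and c ∘ e = id, let D = {(a,b) ∈ X₁ × X₁ : d(a) = c(b)}, and suppose m : D → X₁ is a group homomorphism satisfying m(a, e(d(a))) = a and m(e(c(b)), b) = b for all a, b ∈ X₁. Then the Peiffer identity holds on the kernel of d: for all a, b ∈ ker d, e(c(a)) · b · e(c(a))⁻¹ = a · b · a⁻¹. -/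
/-! With `u = e (c a)` and `b ∈ ker d`, the pairs `(u, a)` and `(b, 1)` are composable and
`(u, a) * (b, 1) = (u * b * u⁻¹, 1) * (u, a)` in `X₁ × X₁`. Applying the homomorphism `m` and
the unit laws `m (u, a) = a`, `m (x, 1) = x` for `x ∈ ker d` gives `a * b = (u * b * u⁻¹) * a`. -/

namespace compPairs

variable {X₁ X₀ : Type*} [Group X₁] [Group X₀] {d c : X₁ →* X₀}

theorem mk_one_mem {x : X₁} (hx : x ∈ d.ker) : (x, 1) ∈ compPairs d c := by
  simpa [mem_compPairs] using hx

theorem conj_mk_one_mem {x : X₁} (u : X₁) (hx : x ∈ d.ker) :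
    (u * x * u⁻¹, 1) ∈ compPairs d c :=
  mk_one_mem (d.normal_ker.conj_mem x hx u)

theorem mk_mul_mk_one {u a b : X₁} (hua : (u, a) ∈ compPairs d c) (hb : b ∈ d.ker) :
    (⟨(u, a), hua⟩ : compPairs d c) * ⟨(b, 1), mk_one_mem hb⟩ =
      ⟨(u * b * u⁻¹, 1), conj_mk_one_mem u hb⟩ * ⟨(u, a), hua⟩ := by
  ext <;> simp

variable (m : compPairs d c →* X₁)

theorem map_mk_one (e : X₀ →* X₁) (hce : ∀ x, c (e x) = x)
    (hml : ∀ a : X₁, m ⟨(a, e (d a)), (mem_compPairs d c _).mpr (hce (d a)).symm⟩ = a)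
    {x : X₁} (hx : x ∈ d.ker) : m ⟨(x, 1), mk_one_mem hx⟩ = x := by
  have hex : e (d x) = 1 := by rw [d.mem_ker.mp hx, map_one]
  calc m ⟨(x, 1), mk_one_mem hx⟩
      = m ⟨(x, e (d x)), (mem_compPairs d c _).mpr (hce (d x)).symm⟩ := by simp_rw [hex]
    _ = x := hml x

end compPairs

/-- an internal category structure on a reflexive graph of groups forces
the Peiffer identity on `ker d`. -/
theorem peiffer_of_internal_category {X₁ X₀ : Type*} [Group X₁] [Group X₀]
    (d c : X₁ →* X₀) (e : X₀ →* X₁)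
    (hde : ∀ x, d (e x) = x) (hce : ∀ x, c (e x) = x)
    (m : compPairs d c →* X₁)
    (hml : ∀ a : X₁, m ⟨(a, e (d a)), (mem_compPairs d c _).mpr (hce (d a)).symm⟩ = a)
    (hmr : ∀ b : X₁, m ⟨(e (c b), b), (mem_compPairs d c _).mpr (hde (c b))⟩ = b) :
    ∀ a b : X₁, a ∈ d.ker → b ∈ d.ker →
      e (c a) * b * (e (c a))⁻¹ = a * b * a⁻¹ := by
  intro a b _ hb
  have key := congrArg m (compPairs.mk_mul_mk_one ((mem_compPairs d c _).mpr (hde (c a))) hb)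
  rw [map_mul, map_mul, hmr, compPairs.map_mk_one m e hce hml hb,
    compPairs.map_mk_one m e hce hml (d.normal_ker.conj_mem b hb _)] at key
  exact eq_mul_inv_of_mul_eq key.symm
end

section
/- Let X₁ and X₀ be groups and d, c : X₁ → X₀, e : X₀ → X₁ group homomorphisms with d ∘ e = id and c ∘ e = id, and let D = {(a,b) ∈ X₁ × X₁ : d(a) = c(b)}. Suppose the Peiffer identity holds: for all a, b ∈ ker d, e(c(a)) · b · e(c(a))⁻¹ = a · b · a⁻¹. Then the map m : D → X₁ defined by m(a,b) = b · e(c(b))⁻¹ · a is a group homomorphism, and it satisfies m(a, e(d(a))) = a and m(e(c(b)), b) = b for all a, b ∈ X₁. -/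
theorem Commute.inv_mul_of_conj_eq {G : Type*} [Group G] {x y g : G}
    (h : x * g * x⁻¹ = y * g * y⁻¹) : Commute (y⁻¹ * x) g := by
  have hxg : x * g = y * g * y⁻¹ * x := by rw [← h, inv_mul_cancel_right]
  calc y⁻¹ * x * g = y⁻¹ * (y * g * y⁻¹ * x) := by rw [mul_assoc, hxg]
    _ = g * (y⁻¹ * x) := by group

section ReflexiveGraph

variable {X₁ X₀ : Type*} [Group X₁] [Group X₀] {d c : X₁ →* X₀} {e : X₀ →* X₁}

theorem commute_mul_inv_e_c (hde : ∀ x, d (e x) = x) (hce : ∀ x, c (e x) = x)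
    (peiffer : ∀ a b : X₁, a ∈ d.ker → b ∈ d.ker →
      e (c a) * b * (e (c a))⁻¹ = a * b * a⁻¹)
    (b : X₁) {g : X₁} (hg : g ∈ d.ker) : Commute (b * (e (c b))⁻¹) g := by
  set a := e (d b) * b⁻¹
  have ha : a ∈ d.ker := by simp [a, MonoidHom.mem_ker, hde]
  have hdiff : a⁻¹ * e (c a) = b * (e (c b))⁻¹ := by simp [a, hce, mul_assoc]
  rw [← hdiff]
  exact .inv_mul_of_conj_eq (peiffer a g ha hg)

variable (hde : ∀ x, d (e x) = x) (hce : ∀ x, c (e x) = x)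
    (peiffer : ∀ a b : X₁, a ∈ d.ker → b ∈ d.ker →
      e (c a) * b * (e (c a))⁻¹ = a * b * a⁻¹)

def compMul : compPairs d c →* X₁ where
  toFun p := (p : X₁ × X₁).2 * (e (c (p : X₁ × X₁).2))⁻¹ * (p : X₁ × X₁).1
  map_one' := by simp
  map_mul' := by
    rintro ⟨⟨a₁, b₁⟩, hp₁⟩ ⟨⟨a₂, b₂⟩, -⟩
    have hker : (e (c b₁))⁻¹ * a₁ ∈ d.ker := by
      simp [MonoidHom.mem_ker, hde, (mem_compPairs d c _).mp hp₁]
    have key := (commute_mul_inv_e_c hde hce peiffer b₂ hker).eq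
    calc b₁ * b₂ * (e (c (b₁ * b₂)))⁻¹ * (a₁ * a₂)
        = b₁ * (b₂ * (e (c b₂))⁻¹ * ((e (c b₁))⁻¹ * a₁)) * a₂ := by
          simp only [map_mul]; group
      _ = b₁ * (e (c b₁))⁻¹ * a₁ * (b₂ * (e (c b₂))⁻¹ * a₂) := by rw [key]; group

end ReflexiveGraph

/-- if the Peiffer identity holds on `ker d`, then
`m (a, b) = b * (e (c b))⁻¹ * a` is a group homomorphism on composable pairs and
satisfies the unit laws of an internal category. -/
theorem internal_category_of_peiffer {X₁ X₀ : Type*} [Group X₁] [Group X₀]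
    (d c : X₁ →* X₀) (e : X₀ →* X₁)
    (hde : ∀ x, d (e x) = x) (hce : ∀ x, c (e x) = x)
    (peiffer : ∀ a b : X₁, a ∈ d.ker → b ∈ d.ker →
      e (c a) * b * (e (c a))⁻¹ = a * b * a⁻¹) :
    ∃ m : compPairs d c →* X₁,
      (∀ p : compPairs d c,
        m p = (p : X₁ × X₁).2 * (e (c (p : X₁ × X₁).2))⁻¹ * (p : X₁ × X₁).1) ∧
      (∀ a : X₁, m ⟨(a, e (d a)), (mem_compPairs d c _).mpr (hce (d a)).symm⟩ = a) ∧
      (∀ b : X₁, m ⟨(e (c b), b), (mem_compPairs d c _).mpr (hde (c b))⟩ = b) := by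
  refine ⟨compMul hde hce peiffer, fun _ => rfl, fun a => ?_, fun b => ?_⟩
  · simp [compMul, hce]
  · simp [compMul]
end

section
/- Let X₁ and X₀ be groups and d, c : X₁ → X₀, e : X₀ → X₁ group homomorphisms with d ∘ e = id and c ∘ e = id. Let P₁ ⊆ X₁ and P₀ ⊆ X₀ be submonoids with d(P₁) ⊆ P₀, c(P₁) ⊆ P₀, e(P₀) ⊆ P₁, and suppose the Schreier condition holds: for every a ∈ P₁, a · e(d(a))⁻¹ ∈ P₁. Suppose moreover the Peiffer identity holds: for all a, b ∈ ker d, e(c(a)) · b · e(c(a))⁻¹ = a · b · a⁻¹. Then the composition m(a,b) = b · e(c(b))⁻¹ · a is monotone on positive cones: for all a, b ∈ P₁ with d(a) = c(b), one has b · e(c(b))⁻¹ · a ∈ P₁. -/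
/-- for a Schreier reflexive graph of right-preordered groups satisfying
the Peiffer identity, the composition `m (a, b) = b * (e (c b))⁻¹ * a` is monotone on
positive cones. -/
theorem composition_monotone {X₁ X₀ : Type*} [Group X₁] [Group X₀]
    (d c : X₁ →* X₀) (e : X₀ →* X₁)
    (hde : ∀ x, d (e x) = x) (hce : ∀ x, c (e x) = x)
    (P₁ : Submonoid X₁) (P₀ : Submonoid X₀)
    (hd : ∀ a ∈ P₁, d a ∈ P₀) (hc : ∀ a ∈ P₁, c a ∈ P₀) (he : ∀ x ∈ P₀, e x ∈ P₁)
    (schreier : ∀ a ∈ P₁, a * (e (d a))⁻¹ ∈ P₁)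
    (peiffer : ∀ a b : X₁, a ∈ d.ker → b ∈ d.ker →
      e (c a) * b * (e (c a))⁻¹ = a * b * a⁻¹) :
    ∀ a ∈ P₁, ∀ b ∈ P₁, d a = c b → b * (e (c b))⁻¹ * a ∈ P₁ := by
  intro a ha b hb hdc
  have ha' : a * (e (d a))⁻¹ ∈ P₁ := schreier a ha
  have ha'k : a * (e (d a))⁻¹ ∈ d.ker := by
    simp [MonoidHom.mem_ker, hde]
  have hb'k : (b * (e (d b))⁻¹)⁻¹ ∈ d.ker := by
    simp [MonoidHom.mem_ker, hde]
  have hP := peiffer ((b * (e (d b))⁻¹)⁻¹) (a * (e (d a))⁻¹) hb'k ha'k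
  simp only [map_inv, map_mul, hce, hde, mul_inv_rev, inv_inv] at hP
  rw [hdc] at hP
  have key : b * (e (c b))⁻¹ * a = a * (e (c b))⁻¹ * b := by
    have h2 := congrArg (fun x => b * (e (d b))⁻¹ * x * (e (d b))) hP
    group at h2 ⊢
    exact h2
  rw [hdc] at ha'
  rw [show b * (e (c b))⁻¹ * a = a * (e (c b))⁻¹ * b * 1 from by rw [key]; group]
  exact mul_mem (mul_mem ha' hb) (one_mem _)
end

section
/- Let G and X₀ be groups, μ : X₀ → Aut(G) a group homomorphism, and ∂ : G → X₀ a group homomorphism satisfying ∂(μ(x)(g)) = x·∂(g)·x⁻¹ for all x ∈ X₀, g ∈ G. Let P₀ ⊆ X₀ be a submonoid. Then S = {(a,b) ∈ G × X₀ : b ∈ P₀ and ∂(a)·b ∈ P₀} is a submonoid of the semidirect product G ⋊_μ X₀, and the map σ(a,b) = (a⁻¹, ∂(a)·b) maps S into S. -/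
/-! The precrossed-module identity says exactly that `(a, b) ↦ δ a * b` is a group
homomorphism `G ⋊[μ] X₀ →* X₀`, so `S` is the intersection of the preimages of `P₀` under
two homomorphisms, the projection and this one. The inversion swaps the two conditions:
`σ (a, b)` has second component `δ a * b` and image `δ a⁻¹ * (δ a * b) = b`. -/

/-- The positive cone `S = {(a,b) : b ∈ P₀ ∧ δ a * b ∈ P₀}` of the effective internal
equivalence relation determined by `δ`, inside the semidirect product `G ⋊[μ] X₀`. -/
def effectiveCone {G X₀ : Type*} [Group G] [Group X₀] (μ : X₀ →* MulAut G)
    (δ : G →* X₀) (P₀ : Submonoid X₀) : Set (G ⋊[μ] X₀) :=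
  {g | g.right ∈ P₀ ∧ δ g.left * g.right ∈ P₀}

namespace SemidirectProduct

variable {G X₀ : Type*} [Group G] [Group X₀] {μ : X₀ →* MulAut G} {δ : G →* X₀}

def targetHom (δ : G →* X₀) (precrossed : ∀ (x : X₀) (g : G), δ (μ x g) = x * δ g * x⁻¹) :
    G ⋊[μ] X₀ →* X₀ :=
  lift δ (MonoidHom.id X₀) fun x ↦ by ext g; simp [precrossed]

def effectiveConeSubmonoid (δ : G →* X₀)
    (precrossed : ∀ (x : X₀) (g : G), δ (μ x g) = x * δ g * x⁻¹) (P₀ : Submonoid X₀) :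
    Submonoid (G ⋊[μ] X₀) :=
  P₀.comap rightHom ⊓ P₀.comap (targetHom δ precrossed)

theorem coe_effectiveConeSubmonoid
    (precrossed : ∀ (x : X₀) (g : G), δ (μ x g) = x * δ g * x⁻¹) (P₀ : Submonoid X₀) :
    (effectiveConeSubmonoid δ precrossed P₀ : Set (G ⋊[μ] X₀)) = effectiveCone μ δ P₀ :=
  rfl

theorem inversion_mem_effectiveCone {P₀ : Submonoid X₀} {g : G ⋊[μ] X₀}
    (hg : g ∈ effectiveCone μ δ P₀) :
    (⟨g.left⁻¹, δ g.left * g.right⟩ : G ⋊[μ] X₀) ∈ effectiveCone μ δ P₀ := by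
  refine ⟨hg.2, ?_⟩
  simpa only [map_inv, inv_mul_cancel_left] using hg.1

end SemidirectProduct

/-- `S` is a submonoid of `G ⋊[μ] X₀`, and the inversion
`σ (a, b) = (a⁻¹, δ a * b)` maps `S` into `S`. -/
theorem effectiveCone_submonoid_and_inversion {G X₀ : Type*} [Group G] [Group X₀]
    (μ : X₀ →* MulAut G) (δ : G →* X₀)
    (precrossed : ∀ (x : X₀) (g : G), δ (μ x g) = x * δ g * x⁻¹)
    (P₀ : Submonoid X₀) :
    (∃ M : Submonoid (G ⋊[μ] X₀), (M : Set (G ⋊[μ] X₀)) = effectiveCone μ δ P₀) ∧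
    (∀ g ∈ effectiveCone μ δ P₀,
      (⟨g.left⁻¹, δ g.left * g.right⟩ : G ⋊[μ] X₀) ∈ effectiveCone μ δ P₀) :=
  ⟨⟨SemidirectProduct.effectiveConeSubmonoid δ precrossed P₀,
      SemidirectProduct.coe_effectiveConeSubmonoid precrossed P₀⟩,
    fun _ ↦ SemidirectProduct.inversion_mem_effectiveCone⟩
end

section
/- Let K and X₀ be groups, μ : X₀ → Aut(K) a group homomorphism, P a submonoid of the semidirect product K ⋊_μ X₀ and P₀ a submonoid of X₀ such that: (i) for every (k,x) ∈ P, x ∈ P₀ (monotonicity of the projection); (ii) for every x ∈ P₀, (1,x) ∈ P (monotonicity of the section); and (iii) the Schreier condition holds: for every (k,x) ∈ P, (k,1) ∈ P. Then P = {(k,x) ∈ K × X₀ : (k,1) ∈ P and x ∈ P₀}; that is, P is the product of the cone P ∩ (K × {1}) of the kernel with the cone P₀ of the base. -/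
/-- a Schreier positive cone on a semidirect product of groups is
necessarily the product of the cone of the kernel and the cone of the base. -/
theorem schreier_cone_is_product {K X₀ : Type*} [Group K] [Group X₀]
    (μ : X₀ →* MulAut K) (P : Submonoid (K ⋊[μ] X₀)) (P₀ : Submonoid X₀)
    (hproj : ∀ g ∈ P, SemidirectProduct.right g ∈ P₀)
    (hsec : ∀ x ∈ P₀, (SemidirectProduct.inr x : K ⋊[μ] X₀) ∈ P)
    (hschreier : ∀ g ∈ P, (SemidirectProduct.inl (SemidirectProduct.left g) : K ⋊[μ] X₀) ∈ P) :
    ∀ g : K ⋊[μ] X₀,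
      g ∈ P ↔ ((SemidirectProduct.inl g.left : K ⋊[μ] X₀) ∈ P ∧ g.right ∈ P₀) := fun g =>
  ⟨fun hg => ⟨hschreier g hg, hproj g hg⟩, fun ⟨hk, hx⟩ =>
    SemidirectProduct.inl_left_mul_inr_right g ▸ P.mul_mem hk (hsec _ hx)⟩
end

section
/- Let G be a group and P ⊆ G a submonoid. Then the following are equivalent: (1) for every g ∈ P and every x ∈ G, x·g ∈ P if and only if x ∈ P; (2) P is closed under inverses, i.e. p⁻¹ ∈ P for every p ∈ P (so P is a subgroup of G). Condition (1) expresses that the indiscrete point of the right-preordered group (G,P) is a Schreier point, i.e. that the positive cone ⋃_{g∈P} P^{−g} × {g} of the indiscrete equivalence relation equals the product cone P × P; hence (G,P) admits an S-center exactly when P is a subgroup. -/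
/-- the indiscrete point of a right-preordered group `(G, P)` is a
Schreier point (i.e. for every `g ∈ P` and `x ∈ G`, `x * g ∈ P ↔ x ∈ P`) exactly when
the positive cone `P` is closed under inverses, i.e. is a subgroup. -/
theorem indiscrete_schreier_iff_subgroup {G : Type*} [Group G] (P : Submonoid G) :
    (∀ g ∈ P, ∀ x : G, x * g ∈ P ↔ x ∈ P) ↔ (∀ p ∈ P, p⁻¹ ∈ P) := by
  constructor
  · intro hSchreier p hp
    exact (hSchreier p hp p⁻¹).mp (by rw [inv_mul_cancel]; exact P.one_mem)
  · intro hInv g hg x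
    let H : Subgroup G := { P with inv_mem' := hInv _ }
    exact H.mul_mem_cancel_right hg
end

section
/- Let X₁ and X₀ be groups, d : X₁ → X₀ and e : X₀ → X₁ group homomorphisms with d ∘ e = id, and P₁ ⊆ X₁, P₀ ⊆ X₀ submonoids with e(P₀) ⊆ P₁. Suppose the Schreier condition holds: for every a ∈ P₁, a · e(d(a))⁻¹ ∈ P₁. Then for every x ∈ P₀ and every a ∈ (ker d) ∩ P₁, the conjugate e(x) · a · e(x)⁻¹ belongs to (ker d) ∩ P₁; that is, the conjugation action of P₀ through e preserves the positive cone of the kernel. -/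
section SchreierPoint

variable {X₁ X₀ : Type*} [Group X₁] [Group X₀] (d : X₁ →* X₀) (e : X₀ →* X₁)

theorem map_section_mul_of_mem_ker (hde : ∀ x, d (e x) = x) (x : X₀) {a : X₁}
    (ha : a ∈ d.ker) : d (e x * a) = x := by
  rw [map_mul, hde, MonoidHom.mem_ker.mp ha, mul_one]

theorem mul_inv_section_mem_of_map_eq (P₁ : Submonoid X₁)
    (schreier : ∀ a ∈ P₁, a * (e (d a))⁻¹ ∈ P₁) {c : X₁} {x : X₀} (hc : c ∈ P₁)
    (hcx : d c = x) : c * (e x)⁻¹ ∈ P₁ :=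
  hcx ▸ schreier c hc

end SchreierPoint

/-- for a Schreier point of right-preordered groups, conjugation by
`e x` (`x` positive) preserves the positive cone of the kernel. -/
theorem schreier_action_preserves_kernel_cone {X₁ X₀ : Type*} [Group X₁] [Group X₀]
    (d : X₁ →* X₀) (e : X₀ →* X₁) (hde : ∀ x, d (e x) = x)
    (P₁ : Submonoid X₁) (P₀ : Submonoid X₀) (he : ∀ x ∈ P₀, e x ∈ P₁)
    (schreier : ∀ a ∈ P₁, a * (e (d a))⁻¹ ∈ P₁) :
    ∀ x ∈ P₀, ∀ a : X₁, a ∈ d.ker → a ∈ P₁ →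
      e x * a * (e x)⁻¹ ∈ d.ker ∧ e x * a * (e x)⁻¹ ∈ P₁ := by
  intro x hx a ha_ker ha_pos
  refine ⟨d.normal_ker.conj_mem a ha_ker (e x), ?_⟩
  -- `e x * a` is positive and lies over `x`, so the Schreier condition strips `e x` off the right.
  exact mul_inv_section_mem_of_map_eq d e P₁ schreier (P₁.mul_mem (he x hx) ha_pos)
    (map_section_mul_of_mem_ker d e hde x ha_ker)
end

section
/- Let X₁ and X₀ be groups, d : X₁ → X₀ and e : X₀ → X₁ group homomorphisms with d ∘ e = id, and P₁ ⊆ X₁, P₀ ⊆ X₀ submonoids with d(P₁) ⊆ P₀ and e(P₀) ⊆ P₁. Suppose the Schreier condition holds: for every a ∈ P₁, a · e(d(a))⁻¹ ∈ P₁. Then the map a ↦ (a · e(d(a))⁻¹, d(a)) is a bijection from P₁ onto ((ker d) ∩ P₁) × P₀, with inverse (k,x) ↦ k · e(x). In particular every a ∈ P₁ factors uniquely as a = k · e(x) with k ∈ (ker d) ∩ P₁ and x ∈ P₀. -/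
/-!
Writing `a = (a * (e (d a))⁻¹) * e (d a)`, the first factor always lies in `ker d`, and
`(k, x) ↦ k * e x` undoes `a ↦ (a * (e (d a))⁻¹, d a)` on `ker d × X₀` because `d (k * e x) = x`.
The cone condition only enters through the maps-to properties: the Schreier condition and
`d(P₁) ⊆ P₀` send `P₁` into `(ker d ∩ P₁) × P₀`, and `e(P₀) ⊆ P₁` sends it back.
-/

namespace MonoidHom.SplitEpi

variable {X₁ X₀ : Type*} [Group X₁] [Group X₀] (d : X₁ →* X₀) (e : X₀ →* X₁)

def decompose (a : X₁) : X₁ × X₀ := (a * (e (d a))⁻¹, d a)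

def recompose (q : X₁ × X₀) : X₁ := q.1 * e q.2

theorem recompose_decompose (a : X₁) : recompose e (decompose d e a) = a :=
  inv_mul_cancel_right a (e (d a))

variable {d e}

theorem decompose_fst_mem_ker (hde : Function.LeftInverse d e) (a : X₁) :
    (decompose d e a).1 ∈ d.ker := by
  simp [decompose, MonoidHom.mem_ker, hde (d a)]

theorem map_recompose_of_mem_ker (hde : Function.LeftInverse d e) {q : X₁ × X₀}
    (hq : q.1 ∈ d.ker) : d (recompose e q) = q.2 := by
  rw [recompose, map_mul, hde, MonoidHom.mem_ker.mp hq, one_mul]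

theorem decompose_recompose_of_mem_ker (hde : Function.LeftInverse d e) {q : X₁ × X₀}
    (hq : q.1 ∈ d.ker) : decompose d e (recompose e q) = q := by
  rw [decompose, map_recompose_of_mem_ker hde hq, recompose, mul_inv_cancel_right]

variable {P₁ : Submonoid X₁} {P₀ : Submonoid X₀}

theorem invOn_decompose (hde : Function.LeftInverse d e) :
    Set.InvOn (recompose e) (decompose d e) (P₁ : Set X₁)
      (((d.ker : Set X₁) ∩ P₁) ×ˢ (P₀ : Set X₀)) :=
  ⟨fun a _ => recompose_decompose d e a,
    fun _ hq => decompose_recompose_of_mem_ker hde hq.1.1⟩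

theorem mapsTo_decompose (hde : Function.LeftInverse d e) (hd : ∀ a ∈ P₁, d a ∈ P₀)
    (schreier : ∀ a ∈ P₁, a * (e (d a))⁻¹ ∈ P₁) :
    Set.MapsTo (decompose d e) (P₁ : Set X₁)
      (((d.ker : Set X₁) ∩ P₁) ×ˢ (P₀ : Set X₀)) :=
  fun a ha => ⟨⟨decompose_fst_mem_ker hde a, schreier a ha⟩, hd a ha⟩

theorem mapsTo_recompose (he : ∀ x ∈ P₀, e x ∈ P₁) :
    Set.MapsTo (recompose e) (((d.ker : Set X₁) ∩ P₁) ×ˢ (P₀ : Set X₀)) P₁ :=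
  fun _ hq => P₁.mul_mem hq.1.2 (he _ hq.2)

theorem existsUnique_factorization (hde : Function.LeftInverse d e)
    (hd : ∀ a ∈ P₁, d a ∈ P₀) (schreier : ∀ a ∈ P₁, a * (e (d a))⁻¹ ∈ P₁) {a : X₁}
    (ha : a ∈ P₁) :
    ∃! q : X₁ × X₀, q ∈ ((d.ker : Set X₁) ∩ P₁) ×ˢ (P₀ : Set X₀) ∧ a = recompose e q := by
  refine ⟨decompose d e a, ⟨mapsTo_decompose hde hd schreier ha, ?_⟩, ?_⟩
  · exact (recompose_decompose d e a).symm
  · rintro q ⟨hq, rfl⟩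
    exact (decompose_recompose_of_mem_ker hde hq.1.1).symm

end MonoidHom.SplitEpi

open MonoidHom.SplitEpi in
/-- for a Schreier point of right-preordered groups, the map
`a ↦ (a * (e (d a))⁻¹, d a)` is a bijection from `P₁` onto `((ker d) ∩ P₁) × P₀`, with
inverse `(k, x) ↦ k * e x`; every positive element factors uniquely as `k * e x`. -/
theorem schreier_cone_decomposition {X₁ X₀ : Type*} [Group X₁] [Group X₀]
    (d : X₁ →* X₀) (e : X₀ →* X₁) (hde : ∀ x, d (e x) = x)
    (P₁ : Submonoid X₁) (P₀ : Submonoid X₀)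
    (hd : ∀ a ∈ P₁, d a ∈ P₀) (he : ∀ x ∈ P₀, e x ∈ P₁)
    (schreier : ∀ a ∈ P₁, a * (e (d a))⁻¹ ∈ P₁) :
    Set.BijOn (fun a : X₁ => (a * (e (d a))⁻¹, d a)) (P₁ : Set X₁)
      ((((d.ker : Set X₁) ∩ (P₁ : Set X₁)) ×ˢ (P₀ : Set X₀))) ∧
    (∀ a ∈ P₁, (a * (e (d a))⁻¹) * e (d a) = a) ∧
    (∀ k x, k ∈ d.ker → k ∈ P₁ → x ∈ P₀ →
      (k * e x) * (e (d (k * e x)))⁻¹ = k ∧ d (k * e x) = x) ∧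
    (∀ a ∈ P₁, ∃! q : X₁ × X₀,
      (q.1 ∈ d.ker ∧ q.1 ∈ P₁ ∧ q.2 ∈ P₀) ∧ a = q.1 * e q.2) := by
  refine ⟨(invOn_decompose hde).bijOn (mapsTo_decompose hde hd schreier)
      (mapsTo_recompose he), fun a _ => recompose_decompose d e a,
    fun k x hk _ _ => ?_, fun a ha => ?_⟩
  · exact Prod.ext_iff.mp (decompose_recompose_of_mem_ker hde (q := (k, x)) hk)
  · simpa only [Set.mem_prod, Set.mem_inter_iff, SetLike.mem_coe, and_assoc, recompose] using
      existsUnique_factorization hde hd schreier ha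
end

section
/- Let K and X₀ be groups, ∂ : K → X₀ a group homomorphism, and P_K ⊆ K, P₀ ⊆ X₀ submonoids with ∂(P_K) ⊆ P₀. Then the map σ(k,x) = (k⁻¹, ∂(k)·x) on K × X₀ maps P_K × P₀ into P_K × P₀ if and only if P_K is closed under inverses (k⁻¹ ∈ P_K for all k ∈ P_K, i.e. P_K is a subgroup of K). Consequently, a Schreier internal category in right-preordered groups, presented as a semidirect product with positive cone P_K × P₀ and inversion σ, is an internal groupoid exactly when the positive cone P_K of the kernel is a group. -/
/-- the inversion `σ (k, x) = (k⁻¹, δ k * x)` of a Schreier internal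
category in right-preordered groups is monotone on the product cone `P_K × P₀` if and
only if the kernel cone `P_K` is closed under inverses (i.e. is a group). -/
theorem schreier_groupoid_iff_kernel_cone_group {K X₀ : Type*} [Group K] [Group X₀]
    (δ : K →* X₀) (PK : Submonoid K) (P₀ : Submonoid X₀)
    (hδ : ∀ k ∈ PK, δ k ∈ P₀) :
    Set.MapsTo (fun p : K × X₀ => (p.1⁻¹, δ p.1 * p.2))
      ((PK : Set K) ×ˢ (P₀ : Set X₀)) ((PK : Set K) ×ˢ (P₀ : Set X₀)) ↔
    (∀ k ∈ PK, k⁻¹ ∈ PK) := by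
  refine ⟨fun hσ k hk => (hσ (Set.mk_mem_prod hk P₀.one_mem)).1, ?_⟩
  rintro hinv ⟨k, x⟩ ⟨hk, hx⟩
  exact ⟨hinv k hk, P₀.mul_mem (hδ k hk) hx⟩
end

section
/- In the group ℚˣ × ℚˣ (the direct product of two copies of the multiplicative group of nonzero rationals), let C = {1, −1} and P = (C × {b ∈ ℚˣ : |b| ≤ 1}) ∪ ((ℚˣ \ C) × {b ∈ ℚˣ : |b| < 1}). Then: (1) P is a submonoid of ℚˣ × ℚˣ; (2) P is closed under the map (a,b) ↦ (a⁻¹, b); (3) (5, 1/2) ∈ P but (5, 1) ∉ P, where (5,1) = (5,1/2)·(1,1/2)⁻¹. Hence the corresponding internal equivalence relation in right-preordered groups is a groupoid (inversion σ(a,b) = (a⁻¹,b) is monotone) but is not a Schreier internal category (the Schreier condition (a,b) ∈ P ⟹ (a,1) ∈ P fails). -/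
/-!
`P` is the lexicographic cone built from the subgroup `C² ≤ ℚˣ` over the cone
`Q = {b : |b| ≤ 1}` of `ℚˣ`: `(a, b) ∈ P` iff `b ∈ Q`, and `a ∈ C²` whenever `b` is invertible
in `Q`, i.e. `|b| = 1`. Such a cone is a submonoid for any submonoid `K` in place of `C²`, since
`b, b' ∈ Q` and `(b b')⁻¹ ∈ Q` force `b⁻¹, b'⁻¹ ∈ Q`; it is closed under `(a, b) ↦ (a⁻¹, b)` as
soon as `K` is a subgroup. The Schreier condition fails because `(a, b) ↦ (a, 1)` can move a
point with `|b| < 1` onto the boundary `|b| = 1`, where membership suddenly depends on `a`.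
-/

/-- The subgroup `C² = {1, -1}` of `ℚˣ`. -/
def C2 : Set ℚˣ := {1, -1}

/-- The positive cone `(C² × ℚˣ_{|·|≤1}) ∪ ((ℚˣ \ C²) × ℚˣ_{|·|<1})` of `ℚˣ × ℚˣ`. -/
def groupoidCone : Set (ℚˣ × ℚˣ) :=
  {p | (p.1 ∈ C2 ∧ |(p.2 : ℚ)| ≤ 1) ∨ (p.1 ∉ C2 ∧ |(p.2 : ℚ)| < 1)}

section LexCone

variable {G H : Type*} [Monoid G] [Group H]

def lexCone (K : Submonoid G) (Q : Submonoid H) : Submonoid (G × H) where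
  carrier := {p | p.2 ∈ Q ∧ (p.2⁻¹ ∈ Q → p.1 ∈ K)}
  mul_mem' := by
    rintro ⟨a, b⟩ ⟨a', b'⟩ ⟨hb, ha⟩ ⟨hb', ha'⟩
    refine ⟨Q.mul_mem hb hb', fun hinv => K.mul_mem (ha ?_) (ha' ?_)⟩
    · simpa [mul_inv_rev, mul_assoc] using Q.mul_mem hb' hinv
    · simpa [mul_inv_rev] using Q.mul_mem hinv hb
  one_mem' := ⟨Q.one_mem, fun _ => K.one_mem⟩

theorem mem_lexCone {K : Submonoid G} {Q : Submonoid H} {p : G × H} :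
    p ∈ lexCone K Q ↔ p.2 ∈ Q ∧ (p.2⁻¹ ∈ Q → p.1 ∈ K) :=
  Iff.rfl

theorem inv_fst_mem_lexCone {G : Type*} [Group G] {K : Subgroup G} {Q : Submonoid H}
    {p : G × H} (hp : p ∈ lexCone K.toSubmonoid Q) : (p.1⁻¹, p.2) ∈ lexCone K.toSubmonoid Q :=
  ⟨hp.1, fun hinv => K.inv_mem (hp.2 hinv)⟩

end LexCone

def absOneSubgroup : Subgroup ℚˣ :=
  ((absHom : ℚ →*₀ ℚ).toMonoidHom.comp (Units.coeHom ℚ)).ker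

theorem mem_absOneSubgroup {a : ℚˣ} : a ∈ absOneSubgroup ↔ |(a : ℚ)| = 1 :=
  Iff.rfl

theorem mem_C2_iff {a : ℚˣ} : a ∈ C2 ↔ |(a : ℚ)| = 1 := by
  simp only [C2, Set.mem_insert_iff, Set.mem_singleton_iff, Units.ext_iff, Units.val_one,
    Units.val_neg, abs_eq zero_le_one]

def absLeOneSubmonoid : Submonoid ℚˣ where
  carrier := {b | |(b : ℚ)| ≤ 1}
  mul_mem' {b b'} hb hb' := by
    simpa only [Set.mem_ofPred_eq, Units.val_mul, abs_mul] using
      mul_le_one₀ hb (abs_nonneg _) hb'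
  one_mem' := by simp

theorem mem_absLeOneSubmonoid {b : ℚˣ} : b ∈ absLeOneSubmonoid ↔ |(b : ℚ)| ≤ 1 :=
  Iff.rfl

theorem inv_mem_absLeOneSubmonoid {b : ℚˣ} : b⁻¹ ∈ absLeOneSubmonoid ↔ 1 ≤ |(b : ℚ)| := by
  rw [mem_absLeOneSubmonoid, Units.val_inv_eq_inv_val, abs_inv,
    inv_le_one₀ (abs_pos.mpr b.ne_zero)]

theorem coe_lexCone_eq_groupoidCone :
    (lexCone absOneSubgroup.toSubmonoid absLeOneSubmonoid : Set (ℚˣ × ℚˣ)) = groupoidCone := by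
  ext ⟨a, b⟩
  rw [SetLike.mem_coe, mem_lexCone, inv_mem_absLeOneSubmonoid, mem_absLeOneSubmonoid,
    Subgroup.mem_toSubmonoid, mem_absOneSubgroup]
  simp only [groupoidCone, Set.mem_ofPred_eq, mem_C2_iff]
  by_cases ha : |(a : ℚ)| = 1
  · simp [ha]
  · simp only [ha, imp_false, not_le, false_and, false_or, not_false_eq_true, true_and]
    exact ⟨fun h => h.2, fun h => ⟨h.le, h⟩⟩

/-- `groupoidCone` is a submonoid of `ℚˣ × ℚˣ`, it is closed under the
groupoid inversion `(a, b) ↦ (a⁻¹, b)`, but it fails the Schreier condition: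
`(5, 1/2)` is in the cone while `(5, 1) = (5, 1/2) · (1, 1/2)⁻¹` is not. -/
theorem groupoid_not_schreier :
    (∃ M : Submonoid (ℚˣ × ℚˣ), (M : Set (ℚˣ × ℚˣ)) = groupoidCone) ∧
    (∀ p ∈ groupoidCone, (p.1⁻¹, p.2) ∈ groupoidCone) ∧
    ((Units.mk0 (5 : ℚ) (by norm_num), Units.mk0 (1/2 : ℚ) (by norm_num)) ∈
      groupoidCone) ∧
    ((Units.mk0 (5 : ℚ) (by norm_num), (1 : ℚˣ)) ∉ groupoidCone) ∧
    ((Units.mk0 (5 : ℚ) (by norm_num), (1 : ℚˣ)) =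
      (Units.mk0 (5 : ℚ) (by norm_num), Units.mk0 (1/2 : ℚ) (by norm_num)) *
        ((1 : ℚˣ), Units.mk0 (1/2 : ℚ) (by norm_num))⁻¹) := by
  have five_notMem_C2 : Units.mk0 (5 : ℚ) (by norm_num) ∉ C2 := by
    rw [mem_C2_iff]; norm_num
  refine ⟨⟨_, coe_lexCone_eq_groupoidCone⟩, ?_, ?_, ?_, ?_⟩
  · rw [← coe_lexCone_eq_groupoidCone]
    exact fun p => inv_fst_mem_lexCone
  · exact Or.inr ⟨five_notMem_C2, by norm_num [abs_of_pos]⟩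
  · rintro (⟨h5, -⟩ | ⟨-, hlt⟩)
    · exact five_notMem_C2 h5
    · norm_num at hlt
  · ext <;> norm_num
end

section
/- Consider the semidirect product ℚ ⋊ ℚˣ of the additive group ℚ by the multiplicative group ℚˣ acting by multiplication, with multiplication (n,m)·(p,q) = (n + m·p, m·q). Let P = {(n,m) : n is an even natural number and m is a positive natural number} ∪ {(n,m) : n is an odd natural number and m is a positive even natural number}. Then: (1) P is a submonoid of ℚ ⋊ ℚˣ; (2) (3,2) ∈ P but (3,1) ∉ P, where (3,1) = (3,2)·(0,2)⁻¹. Hence the corresponding internal category of right-preordered groups is not a Schreier internal category (the Schreier condition (n,m) ∈ P ⟹ (n,1) ∈ P fails). -/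
/-- Additive automorphisms of `ℚ` as multiplicative automorphisms of `Multiplicative ℚ`. -/
def mulAutOfAddAut : Multiplicative (AddAut ℚ) →* MulAut (Multiplicative ℚ) where
  toFun f := AddEquiv.toMultiplicative (Multiplicative.toAdd f)
  map_one' := by ext x; rfl
  map_mul' f g := by ext x; rfl

/-- The multiplication action of `ℚˣ` on the additive group `ℚ`, as an action by
automorphisms on `Multiplicative ℚ`. -/
def qmu : ℚˣ →* MulAut (Multiplicative ℚ) :=
  mulAutOfAddAut.comp (DistribMulAction.toAddAut ℚˣ ℚ)

/-- The semidirect product `ℚ ⋊ ℚˣ` of the additive group `ℚ` by the multiplicative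
group `ℚˣ` acting by multiplication; its multiplication is
`(n, m) · (p, q) = (n + m·p, m·q)`. -/
abbrev QSemidirect : Type := Multiplicative ℚ ⋊[qmu] ℚˣ

/-- `q : ℚ` is an even natural number. -/
def IsEvenNat (q : ℚ) : Prop := ∃ n : ℕ, Even n ∧ q = n

/-- `q : ℚ` is an odd natural number. -/
def IsOddNat (q : ℚ) : Prop := ∃ n : ℕ, Odd n ∧ q = n

/-- `u : ℚˣ` is a positive natural number. -/
def IsPosNat (u : ℚˣ) : Prop := ∃ m : ℕ, 0 < m ∧ (u : ℚ) = m

/-- `u : ℚˣ` is a positive even natural number. -/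
def IsPosEvenNat (u : ℚˣ) : Prop := ∃ m : ℕ, 0 < m ∧ Even m ∧ (u : ℚ) = m

/-- The positive cone
`P = (2ℕ ⋊ ℕ*) ∪ ((2ℕ+1) ⋊ 2ℕ*)` of `ℚ ⋊ ℚˣ`. -/
def mixedCone : Set QSemidirect :=
  {g | (IsEvenNat (Multiplicative.toAdd g.left) ∧ IsPosNat g.right) ∨
       (IsOddNat (Multiplicative.toAdd g.left) ∧ IsPosEvenNat g.right)}


lemma mul_left_eq (g h : QSemidirect) :
    Multiplicative.toAdd (g * h).left =
      Multiplicative.toAdd g.left + (g.right : ℚ) * Multiplicative.toAdd h.left := rfl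

lemma mul_right_eq (g h : QSemidirect) : (g * h).right = g.right * h.right := rfl

/-- `mixedCone` is a submonoid of `ℚ ⋊ ℚˣ`, `(3, 2)` belongs to it, but
`(3, 1) = (3, 2) · (0, 2)⁻¹` does not; so the corresponding internal category fails the
Schreier condition. -/
theorem internal_category_not_schreier :
    (∃ M : Submonoid QSemidirect, (M : Set QSemidirect) = mixedCone) ∧
    ((⟨Multiplicative.ofAdd (3 : ℚ), Units.mk0 (2 : ℚ) (by norm_num)⟩ : QSemidirect) ∈
      mixedCone) ∧
    ((⟨Multiplicative.ofAdd (3 : ℚ), (1 : ℚˣ)⟩ : QSemidirect) ∉ mixedCone) ∧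
    ((⟨Multiplicative.ofAdd (3 : ℚ), Units.mk0 (2 : ℚ) (by norm_num)⟩ : QSemidirect) *
        (SemidirectProduct.inr (Units.mk0 (2 : ℚ) (by norm_num)) : QSemidirect)⁻¹ =
      (⟨Multiplicative.ofAdd (3 : ℚ), (1 : ℚˣ)⟩ : QSemidirect)) := by
  refine ⟨?_, ?_, ?_, ?_⟩
  · refine ⟨⟨⟨mixedCone, ?_⟩, ?_⟩, rfl⟩
    · rintro g h hg hh
      -- write both first coords as naturals, second coords as positive naturals
      obtain ⟨⟨na, hna, ha⟩, mu, hmu, he, hu⟩ :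
          (∃ na : ℕ, (Even na ∨ Odd na) ∧ Multiplicative.toAdd g.left = na) ∧
          ∃ mu : ℕ, 0 < mu ∧ (Even mu → True) ∧ (g.right : ℚ) = mu := by
        rcases hg with ⟨⟨na, h1, h2⟩, mu, h3, h4⟩ | ⟨⟨na, h1, h2⟩, mu, h3, h4, h5⟩
        · exact ⟨⟨na, Or.inl h1, h2⟩, mu, h3, fun _ => trivial, h4⟩
        · exact ⟨⟨na, Or.inr h1, h2⟩, mu, h3, fun _ => trivial, h5⟩
      clear he
      obtain ⟨⟨nb, hnb, hb⟩, mv, hmv, hv⟩ :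
          (∃ nb : ℕ, (Even nb ∨ Odd nb) ∧ Multiplicative.toAdd h.left = nb) ∧
          ∃ mv : ℕ, 0 < mv ∧ (h.right : ℚ) = mv := by
        rcases hh with ⟨⟨nb, h1, h2⟩, mv, h3, h4⟩ | ⟨⟨nb, h1, h2⟩, mv, h3, h4, h5⟩
        · exact ⟨⟨nb, Or.inl h1, h2⟩, mv, h3, h4⟩
        · exact ⟨⟨nb, Or.inr h1, h2⟩, mv, h3, h5⟩
      have hfst : Multiplicative.toAdd (g * h).left = ((na + mu * nb : ℕ) : ℚ) := by
        rw [mul_left_eq, ha, hu, hb]; push_cast; ring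
      have hsnd : ((g * h).right : ℚ) = ((mu * mv : ℕ) : ℚ) := by
        rw [mul_right_eq]; push_cast [hu, hv]; ring
      -- case analysis on the original membership
      rcases hg with ⟨⟨na', hna', ha'⟩, mu', hmu', hu'⟩ | ⟨⟨na', hna', ha'⟩, mu', hmu', hemu', hu'⟩ <;>
      rcases hh with ⟨⟨nb', hnb', hb'⟩, mv', hmv', hv'⟩ | ⟨⟨nb', hnb', hb'⟩, mv', hmv', hemv', hv'⟩
      all_goals {
        have ea : na = na' := by
          have := ha'.symm.trans ha; exact_mod_cast this.symm
        have eu : mu = mu' := by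
          have := hu'.symm.trans hu; exact_mod_cast this.symm
        have eb : nb = nb' := by
          have := hb'.symm.trans hb; exact_mod_cast this.symm
        have ev : mv = mv' := by
          have := hv'.symm.trans hv; exact_mod_cast this.symm
        subst ea eu eb ev
        first
        | exact Or.inl ⟨⟨na + mu * nb, by simpa using hna'.add (hnb'.mul_left mu), hfst⟩,
            ⟨mu * mv, Nat.mul_pos hmu hmv, hsnd⟩⟩
        | exact Or.inr ⟨⟨na + mu * nb, by
              simpa using (Odd.add_even hna' (hnb'.mul_left mu) : Odd (na + mu * nb)), hfst⟩,
            ⟨mu * mv, Nat.mul_pos hmu hmv, by exact hemu'.mul_right mv, hsnd⟩⟩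
        | { -- second factor has even right component: any parity of first coord works
            rcases Nat.even_or_odd (na + mu * nb) with hpar | hpar
            · exact Or.inl ⟨⟨na + mu * nb, hpar, hfst⟩, ⟨mu * mv, Nat.mul_pos hmu hmv, hsnd⟩⟩
            · exact Or.inr ⟨⟨na + mu * nb, hpar, hfst⟩,
                ⟨mu * mv, Nat.mul_pos hmu hmv, by exact hemv'.mul_left mu, hsnd⟩⟩ }
      }
    · exact Or.inl ⟨⟨0, Even.zero, rfl⟩, 1, one_pos, rfl⟩
  · exact Or.inr ⟨⟨3, by decide, by norm_num⟩, 2, by norm_num, by norm_num, by norm_num⟩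
  · rintro (⟨⟨n, hn, h3⟩, _⟩ | ⟨_, m, hm, hem, h1⟩)
    · have h3' : (3 : ℚ) = n := h3
      have : n = 3 := by exact_mod_cast h3'.symm
      subst this; exact absurd hn (by decide)
    · have h1' : (1 : ℚ) = m := h1
      have : m = 1 := by exact_mod_cast h1'.symm
      subst this; exact absurd hem (by decide)
  · ext
    · simp [SemidirectProduct.mul_left, SemidirectProduct.inv_left, SemidirectProduct.left_inr,
        SemidirectProduct.inv_right]
    · simp [SemidirectProduct.mul_right, SemidirectProduct.inv_right, SemidirectProduct.right_inr]
end
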